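/- arXiv:1201.1654 — 3 statements merged into one kernel-verified Lean document; each statement's English description precedes it below -/
import Mathlib

section
/- Let X be a topological space and Γ, Ψ, Φ : X → ℝ three sequentially lower semicontinuous functions, with Γ also sequentially inf-compact, satisfying: (a) inf_{x∈X} (μΓ(x) + Ψ(x)) = −∞ for all μ > 0; (b) inf_{x∈X} (Ψ(x) + Φ(x)) > −∞; (c) there exists r ∈ (inf_X Φ, sup_X Φ) such that inf_{Φ⁻¹((−∞,r])} Γ < inf_{Φ⁻¹(r)} Γ. Then for each μ > max{0, μ*(Γ, Ψ, Φ, r)}, one has α(μΓ + Ψ, Φ, r) = 0 and β(μΓ + Ψ, Φ, r) > 0. -/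
/-!
On `{Φ ≤ r}` one has `Ψ ≥ γ - r`, so the sublevel sets of the sequentially lower semicontinuous
function `Θ = μΓ + Ψ` restricted to `{Φ ≤ r}` lie in sublevel sets of `Γ`; hence `Θ` attains its
infimum `m` over `{Φ ≤ r}` at some `x̂`. Since `μ > μ*`, some `x₀` with `Φ x₀ < r` satisfies
`Ψ x₀ - γ + r < μ (Γ y - Γ x₀)` whenever `Φ y = r`, and then `Θ y ≥ μ Γ y + γ - r > Θ x₀ ≥ m`.
So `Φ x̂ < r`, and the quotient defining `α` is nonnegative and vanishes at `x̂`. Finally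
`inf_X Θ = -∞` yields a point with `Θ < m`; it lies in `{Φ > r}`, where it makes the quotient
defining `β` positive.
-/

open Filter Topology Set

section

variable {X : Type*}

def SeqLowerSemicontinuous [TopologicalSpace X] (f : X → ℝ) : Prop :=
  ∀ (x : X) (u : ℕ → X), Tendsto u atTop (𝓝 x) →
    (f x : EReal) ≤ liminf (fun n => (f (u n) : EReal)) atTop

namespace SeqLowerSemicontinuous

variable [TopologicalSpace X] {f g : X → ℝ}

theorem add (hf : SeqLowerSemicontinuous f) (hg : SeqLowerSemicontinuous g) :
    SeqLowerSemicontinuous fun x => f x + g x := fun x u hu =>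
  (add_le_add (hf x u hu) (hg x u hu)).trans EReal.le_liminf_add

theorem const_mul (hf : SeqLowerSemicontinuous f) {c : ℝ} (hc : 0 ≤ c) :
    SeqLowerSemicontinuous fun x => c * f x := fun x u hu => by
  have hc' : (0 : EReal) ≤ c := EReal.coe_nonneg.2 hc
  simp only [EReal.coe_mul]
  rw [EReal.liminf_const_mul_of_nonneg_of_ne_top hc' (EReal.coe_ne_top c)]
  exact mul_le_mul_of_nonneg_left (hf x u hu) hc'

theorem isSeqClosed_setOf_le (hf : SeqLowerSemicontinuous f) (t : ℝ) :
    IsSeqClosed {x | f x ≤ t} := fun u x hu hux => by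
  have hle : liminf (fun n => (f (u n) : EReal)) atTop ≤ t := by
    simpa only [liminf_const] using liminf_le_liminf (f := atTop)
      (Eventually.of_forall fun n => EReal.coe_le_coe_iff.2 (hu n))
  exact EReal.coe_le_coe_iff.1 ((hf x u hux).trans hle)

theorem exists_isMinOn_of_isSeqCompact (hf : SeqLowerSemicontinuous f) {K : Set X}
    (hK : IsSeqCompact K) (hne : K.Nonempty) : ∃ x ∈ K, IsMinOn f K x := by
  set S := (fun x => (f x : EReal)) '' K
  obtain ⟨v, -, hv, hvS⟩ := exists_seq_tendsto_sInf (hne.image _) (OrderBot.bddBelow S)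
  choose u huK hfu using hvS
  obtain ⟨x, hxK, φ, hφ, hux⟩ := hK huK
  have hlim : liminf (fun n => (f ((u ∘ φ) n) : EReal)) atTop = sInf S := by
    simpa only [Function.comp_def, hfu] using (hv.comp hφ.tendsto_atTop).liminf_eq
  refine ⟨x, hxK, isMinOn_iff.2 fun y hy => ?_⟩
  exact EReal.coe_le_coe_iff.1 ((hf x _ hux).trans (hlim ▸ sInf_le (mem_image_of_mem _ hy)))

theorem exists_isMinOn (hf : SeqLowerSemicontinuous f) {s K : Set X} (hs : IsSeqClosed s)
    (hK : IsSeqCompact K) {a : X} (ha : a ∈ s) (hsub : ∀ x ∈ s, f x ≤ f a → x ∈ K) :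
    ∃ x ∈ s, IsMinOn f s x := by
  have hsublevel : IsSeqCompact (s ∩ {x | f x ≤ f a}) := fun u hu => by
    obtain ⟨x, -, φ, hφ, hux⟩ := hK fun n => hsub _ (hu n).1 (hu n).2
    exact ⟨x, ⟨hs (fun n => (hu (φ n)).1) hux,
      hf.isSeqClosed_setOf_le _ (fun n => (hu (φ n)).2) hux⟩, φ, hφ, hux⟩
  obtain ⟨x, ⟨hxs, hxa⟩, hmin⟩ :=
    hf.exists_isMinOn_of_isSeqCompact hsublevel ⟨a, ha, le_refl (f a)⟩
  refine ⟨x, hxs, isMinOn_iff.2 fun y hy => ?_⟩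
  by_cases hya : f y ≤ f a
  · exact isMinOn_iff.1 hmin y ⟨hy, hya⟩
  · exact hxa.trans (le_of_not_ge hya)

end SeqLowerSemicontinuous

theorem lt_mul_sub_of_coe_div_lt {p g c μ : ℝ} {η : EReal} (hμ : 0 ≤ μ) (hg : (g : EReal) < η)
    (hc : η ≤ c) (h : (p : EReal) / (η - g) < μ) : p < μ * (c - g) := by
  lift η to ℝ using ⟨(hc.trans_lt (EReal.coe_lt_top c)).ne, hg.ne_bot⟩ with e
  rw [EReal.coe_lt_coe_iff] at hg
  rw [EReal.coe_le_coe_iff] at hc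
  rw [← EReal.coe_sub, ← EReal.coe_div, EReal.coe_lt_coe_iff,
    div_lt_iff₀ (sub_pos.2 hg)] at h
  nlinarith

section

variable {Γ Ψ Φ : X → ℝ} {γ r μ : ℝ}

theorem exists_forall_lt_mul_sub_of_sInf_lt (hμ : 0 ≤ μ)
    (h : sInf {t : EReal | ∃ x : X, Φ x < r ∧
      (Γ x : EReal) < ⨅ y : {y : X // Φ y = r}, (Γ y : EReal) ∧
      t = ((Ψ x - γ + r : ℝ) : EReal) / ((⨅ y : {y : X // Φ y = r}, (Γ y : EReal)) - Γ x)} < μ) :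
    ∃ x₀, Φ x₀ < r ∧ ∀ y, Φ y = r → Ψ x₀ - γ + r < μ * (Γ y - Γ x₀) := by
  obtain ⟨-, ⟨x₀, hx₀r, hx₀η, rfl⟩, hlt⟩ := sInf_lt_iff.1 h
  exact ⟨x₀, hx₀r, fun y hy =>
    lt_mul_sub_of_coe_div_lt hμ hx₀η (iInf_le (fun y : {y // Φ y = r} => (Γ y : EReal)) ⟨y, hy⟩)
      hlt⟩

theorem exists_isMinOn_mul_add [TopologicalSpace X] (hΓ : SeqLowerSemicontinuous Γ)
    (hΨ : SeqLowerSemicontinuous Ψ) (hΦ : SeqLowerSemicontinuous Φ)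
    (hΓcpt : ∀ ρ : ℝ, IsSeqCompact {x : X | Γ x ≤ ρ})
    (hγ : ∀ x, γ ≤ Ψ x + Φ x) (hμ : 0 < μ) (hr : ∃ x, Φ x ≤ r) :
    ∃ x, Φ x ≤ r ∧ IsMinOn (fun x => μ * Γ x + Ψ x) {x | Φ x ≤ r} x := by
  obtain ⟨a, ha⟩ := hr
  refine (hΓ.const_mul hμ.le).add hΨ |>.exists_isMinOn (hΦ.isSeqClosed_setOf_le r)
    (hΓcpt ((μ * Γ a + Ψ a - γ + r) / μ)) ha fun x hx hxa => ?_
  have hxr : Φ x ≤ r := hx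
  show Γ x ≤ _
  rw [le_div_iff₀ hμ]
  linarith [hγ x]

theorem lt_of_isMinOn_mul_add (hγ : ∀ x, γ ≤ Ψ x + Φ x) {x₀ x : X}
    (hx₀ : Φ x₀ ≤ r) (hgap : ∀ y, Φ y = r → Ψ x₀ - γ + r < μ * (Γ y - Γ x₀))
    (hx : Φ x ≤ r) (hmin : IsMinOn (fun x => μ * Γ x + Ψ x) {x | Φ x ≤ r} x) : Φ x < r := by
  refine hx.lt_of_ne fun hxr => ?_
  have := isMinOn_iff.1 hmin x₀ hx₀
  linarith [hgap x hxr, hγ x]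

end

section

variable {Θ Φ : X → ℝ} {r : ℝ}

theorem iInf_div_eq_zero_of_isMinOn {x : X} (hmin : IsMinOn Θ {y | Φ y ≤ r} x) (hx : Φ x < r) :
    ⨅ y : {y : X // Φ y < r}, (((Θ y - Θ x) / (r - Φ y) : ℝ) : EReal) = 0 := by
  refine le_antisymm (iInf_le_of_le ⟨x, hx⟩ (by simp)) (le_iInf fun y => ?_)
  exact EReal.coe_nonneg.2 <| div_nonneg (sub_nonneg.2 (isMinOn_iff.1 hmin y y.2.le))
    (sub_nonneg.2 y.2.le)

theorem zero_lt_iSup_div_of_lt {m : ℝ} (hm : ∀ y, Φ y ≤ r → m ≤ Θ y) {x : X} (hx : Θ x < m) :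
    0 < ⨆ y : {y : X // r < Φ y}, (((Θ y - m) / (r - Φ y) : ℝ) : EReal) := by
  have hxr : r < Φ x := lt_of_not_ge fun h => (hm x h).not_gt hx
  refine lt_of_lt_of_le ?_ (le_iSup _ ⟨x, hxr⟩)
  exact EReal.coe_pos.2 (div_pos_of_neg_of_neg (sub_neg.2 hx) (sub_neg.2 hxr))

end

end

theorem stmt1_general {X : Type*} [TopologicalSpace X]
    (Γ Ψ Φ : X → ℝ)
    (hΓlsc : ∀ (x : X) (u : ℕ → X), Tendsto u atTop (𝓝 x) →
      (Γ x : EReal) ≤ liminf (fun n => (Γ (u n) : EReal)) atTop)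
    (hΨlsc : ∀ (x : X) (u : ℕ → X), Tendsto u atTop (𝓝 x) →
      (Ψ x : EReal) ≤ liminf (fun n => (Ψ (u n) : EReal)) atTop)
    (hΦlsc : ∀ (x : X) (u : ℕ → X), Tendsto u atTop (𝓝 x) →
      (Φ x : EReal) ≤ liminf (fun n => (Φ (u n) : EReal)) atTop)
    (hΓcpt : ∀ ρ : ℝ, IsSeqCompact {x : X | Γ x ≤ ρ})
    (ha : ∀ μ : ℝ, 0 < μ → ∀ K : ℝ, ∃ x : X, μ * Γ x + Ψ x < K)
    (hb : BddBelow (Set.range fun x => Ψ x + Φ x))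
    (r : ℝ)
    -- the quantities `γ`, `η_r` and `μ*(Γ,Ψ,Φ,r)` :
    (γ : ℝ) (hγ : γ = sInf (Set.range fun x => Ψ x + Φ x))
    (ηr : EReal) (hηr : ηr = ⨅ x : {x : X // Φ x = r}, (Γ x : EReal))
    (mustar : EReal)
    (hmustar : mustar = sInf {t : EReal | ∃ x : X, Φ x < r ∧ (Γ x : EReal) < ηr ∧
      t = ((Ψ x - γ + r : ℝ) : EReal) / (ηr - (Γ x : EReal))})
    (μ : ℝ) (hμ0 : 0 < μ) (hμ : mustar < (μ : EReal)) :
    -- conclusion : `α(μΓ + Ψ, Φ, r) = 0` and `β(μΓ + Ψ, Φ, r) > 0`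
    (⨅ x : {x : X // Φ x < r},
        (((μ * Γ x + Ψ x - sInf ((fun y => μ * Γ y + Ψ y) '' {y : X | Φ y ≤ r})) /
          (r - Φ x) : ℝ) : EReal)) = 0 ∧
    0 < ⨆ x : {x : X // r < Φ x},
        (((μ * Γ x + Ψ x - sInf ((fun y => μ * Γ y + Ψ y) '' {y : X | Φ y ≤ r})) /
          (r - Φ x) : ℝ) : EReal) := by
  have hγle : ∀ x, γ ≤ Ψ x + Φ x := fun x => hγ ▸ csInf_le hb ⟨x, rfl⟩
  subst hηr hmustar
  obtain ⟨x₀, hx₀r, hgap⟩ := exists_forall_lt_mul_sub_of_sInf_lt hμ0.le hμ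
  obtain ⟨x, hxr, hmin⟩ :=
    exists_isMinOn_mul_add hΓlsc hΨlsc hΦlsc hΓcpt hγle hμ0 ⟨x₀, hx₀r.le⟩
  have hxlt : Φ x < r := lt_of_isMinOn_mul_add hγle hx₀r.le hgap hxr hmin
  have hm : sInf ((fun y => μ * Γ y + Ψ y) '' {y : X | Φ y ≤ r}) = μ * Γ x + Ψ x :=
    IsLeast.csInf_eq ⟨mem_image_of_mem _ hxr, forall_mem_image.2 (isMinOn_iff.1 hmin)⟩
  obtain ⟨x₁, hx₁⟩ := ha μ hμ0 (μ * Γ x + Ψ x)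
  rw [hm]
  exact ⟨iInf_div_eq_zero_of_isMinOn hmin hxlt,
    zero_lt_iSup_div_of_lt (fun y hy => isMinOn_iff.1 hmin y hy) hx₁⟩

/-- Theorem A = [5], Theorem 2: for sequentially lower semicontinuous
`Γ, Ψ, Φ : X → ℝ` with `Γ` sequentially inf-compact, if `inf_X (μΓ + Ψ) = -∞` for
all `μ > 0`, `Ψ + Φ` is bounded below, and `r ∈ (inf_X Φ, sup_X Φ)` satisfies
`inf_{Φ⁻¹((-∞,r])} Γ < inf_{Φ⁻¹(r)} Γ`, then for every `μ > max{0, μ*(Γ,Ψ,Φ,r)}`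
one has `α(μΓ + Ψ, Φ, r) = 0` and `β(μΓ + Ψ, Φ, r) > 0`. -/
theorem stmt1 {X : Type*} [TopologicalSpace X]
    (Γ Ψ Φ : X → ℝ)
    (hΓlsc : ∀ (x : X) (u : ℕ → X), Tendsto u atTop (𝓝 x) →
      (Γ x : EReal) ≤ liminf (fun n => (Γ (u n) : EReal)) atTop)
    (hΨlsc : ∀ (x : X) (u : ℕ → X), Tendsto u atTop (𝓝 x) →
      (Ψ x : EReal) ≤ liminf (fun n => (Ψ (u n) : EReal)) atTop)
    (hΦlsc : ∀ (x : X) (u : ℕ → X), Tendsto u atTop (𝓝 x) →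
      (Φ x : EReal) ≤ liminf (fun n => (Φ (u n) : EReal)) atTop)
    (hΓcpt : ∀ ρ : ℝ, IsSeqCompact {x : X | Γ x ≤ ρ})
    (ha : ∀ μ : ℝ, 0 < μ → ∀ K : ℝ, ∃ x : X, μ * Γ x + Ψ x < K)
    (hb : BddBelow (Set.range fun x => Ψ x + Φ x))
    (r : ℝ) (hr₁ : ∃ x : X, Φ x < r) (hr₂ : ∃ x : X, r < Φ x)
    (hc : (⨅ x : {x : X // Φ x ≤ r}, (Γ x : EReal)) <
      ⨅ x : {x : X // Φ x = r}, (Γ x : EReal))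
    -- the quantities `γ`, `η_r` and `μ*(Γ,Ψ,Φ,r)` :
    (γ : ℝ) (hγ : γ = sInf (Set.range fun x => Ψ x + Φ x))
    (ηr : EReal) (hηr : ηr = ⨅ x : {x : X // Φ x = r}, (Γ x : EReal))
    (mustar : EReal)
    (hmustar : mustar = sInf {t : EReal | ∃ x : X, Φ x < r ∧ (Γ x : EReal) < ηr ∧
      t = ((Ψ x - γ + r : ℝ) : EReal) / (ηr - (Γ x : EReal))})
    (μ : ℝ) (hμ0 : 0 < μ) (hμ : mustar < (μ : EReal)) :
    -- conclusion : `α(μΓ + Ψ, Φ, r) = 0` and `β(μΓ + Ψ, Φ, r) > 0`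
    (⨅ x : {x : X // Φ x < r},
        (((μ * Γ x + Ψ x - sInf ((fun y => μ * Γ y + Ψ y) '' {y : X | Φ y ≤ r})) /
          (r - Φ x) : ℝ) : EReal)) = 0 ∧
    0 < ⨆ x : {x : X // r < Φ x},
        (((μ * Γ x + Ψ x - sInf ((fun y => μ * Γ y + Ψ y) '' {y : X | Φ y ≤ r})) /
          (r - Φ x) : ℝ) : EReal) :=
  stmt1_general Γ Ψ Φ hΓlsc hΨlsc hΦlsc hΓcpt ha hb r γ hγ ηr hηr mustar hmustar μ hμ0 hμ
end

section
/- Let X be a topological space, A ⊆ ℝ an open interval, and P : X × A → ℝ a function satisfying: (a₁) for each x ∈ X, the function λ ↦ P(x, λ) is quasi-concave and continuous on A; (a₂) for each λ ∈ A, the function x ↦ P(x, λ) is lower semicontinuous and inf-compact; (a₃) sup_{λ∈A} inf_{x∈X} P(x, λ) < inf_{x∈X} sup_{λ∈A} P(x, λ). Then there exists λ* ∈ A such that the function x ↦ P(x, λ*) has at least two global minima. -/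
/-! Fix `ρ` strictly between the two sides of the minimax inequality and suppose that every
`P · λ` has a unique global minimiser `m λ` (it exists by inf-compactness, and `P (m λ) λ < ρ`).
As `P (m λ) ·` exceeds `ρ` somewhere and its superlevel sets are intervals, it exceeds `ρ` on one
side of `λ` only, and is monotone on the other side. Uniqueness makes the points of "right" type
precede those of "left" type. Cluster points of minimisers, lower semicontinuity in `x` and
continuity in `λ` then rule out both a single type on all of `A` and either type at the point
separating the two kinds. -/

open Filter Topology Set

section

variable {X : Type*} [TopologicalSpace X]

theorem LowerSemicontinuous.exists_forall_le_of_isCompact {β : Type*} [LinearOrder β]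
    {f : X → β} (hf : LowerSemicontinuous f) {r : β} (hK : IsCompact {x | f x ≤ r}) {x₀ : X}
    (hx₀ : f x₀ ≤ r) : ∃ x, ∀ y, f x ≤ f y := by
  obtain ⟨x, hxK, hx⟩ := (hf.lowerSemicontinuousOn _).exists_isMinOn ⟨x₀, hx₀⟩ hK
  exact ⟨x, fun y => (le_total (f y) r).elim (fun hy => hx hy) fun hy => le_trans hxK hy⟩

theorem IsCompact.exists_forall_le_of_tendsto {ι κ : Type*} {F : Filter ι} [F.NeBot]
    {K : Set X} (hK : IsCompact K) {φ : ι → X} (hφ : ∀ᶠ i in F, φ i ∈ K) {f : κ → X → ℝ}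
    {s : Set κ} (hf : ∀ j ∈ s, LowerSemicontinuous (f j)) {g : ι → ℝ} {c : ℝ}
    (hg : Tendsto g F (𝓝 c)) (hle : ∀ j ∈ s, ∀ᶠ i in F, f j (φ i) ≤ g i) :
    ∃ w ∈ K, ∀ j ∈ s, f j w ≤ c := by
  obtain ⟨w, hwK, hw⟩ := hK.exists_clusterPt (f := map φ F) (le_principal_iff.2 hφ)
  refine ⟨w, hwK, fun j hj => le_of_not_gt fun hlt => ?_⟩
  obtain ⟨y, hcy, hyw⟩ := exists_between hlt
  have hfreq : ∃ᶠ i in F, y < f j (φ i) := hw.frequently (hf j hj w y hyw)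
  obtain ⟨i, hyi, hi, hgi⟩ :=
    (hfreq.and_eventually ((hle j hj).and (hg.eventually (gt_mem_nhds hcy)))).exists
  linarith

end

theorem exists_real_between_of_iSup_iInf_lt {ι κ : Type*} {f : ι → κ → ℝ}
    (h : (⨆ i, ⨅ j, (f i j : EReal)) < ⨅ j, ⨆ i, (f i j : EReal)) :
    ∃ ρ : ℝ, (∀ i, ∃ j, f i j < ρ) ∧ ∀ j, ∃ i, ρ < f i j := by
  obtain ⟨ρ, hsup, hinf⟩ := EReal.lt_iff_exists_real_btwn.1 h
  refine ⟨ρ, fun i => ?_, fun j => ?_⟩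
  · obtain ⟨j, hj⟩ := iInf_lt_iff.1 ((le_iSup (fun i => ⨅ j, (f i j : EReal)) i).trans_lt hsup)
    exact ⟨j, EReal.coe_lt_coe_iff.1 hj⟩
  · obtain ⟨i, hi⟩ := lt_iSup_iff.1 (hinf.trans_le (iInf_le _ j))
    exact ⟨i, EReal.coe_lt_coe_iff.1 hi⟩

theorem QuasiconcaveOn.min_le_of_mem_Icc {𝕜 β : Type*} [Field 𝕜] [LinearOrder 𝕜]
    [IsStrictOrderedRing 𝕜] [LinearOrder β] {s : Set 𝕜} {f : 𝕜 → β}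
    (hf : QuasiconcaveOn 𝕜 s f) {a b c : 𝕜} (ha : a ∈ s) (hc : c ∈ s) (hb : b ∈ Icc a c) :
    min (f a) (f c) ≤ f b :=
  ((convex_iff_ordConnected.1 (hf _)).out ⟨ha, min_le_left _ _⟩ ⟨hc, min_le_right _ _⟩ hb).2

section Exceeds

variable {A : Set ℝ} {f : ℝ → ℝ} {ρ l : ℝ}

def ExceedsLeft (A : Set ℝ) (f : ℝ → ℝ) (ρ l : ℝ) : Prop :=
  ∃ l' ∈ A, l' < l ∧ ρ < f l'

def ExceedsRight (A : Set ℝ) (f : ℝ → ℝ) (ρ l : ℝ) : Prop :=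
  ∃ l' ∈ A, l < l' ∧ ρ < f l'

theorem exceedsLeft_neg_iff :
    ExceedsLeft (-A) (fun x => f (-x)) ρ l ↔ ExceedsRight A f ρ (-l) := by
  constructor
  · rintro ⟨l', hl', hlt, hρ⟩
    exact ⟨-l', hl', neg_lt_neg hlt, hρ⟩
  · rintro ⟨l', hl', hlt, hρ⟩
    exact ⟨-l', by simpa using hl', neg_lt.1 hlt, by simpa using hρ⟩

theorem exceedsRight_neg_iff :
    ExceedsRight (-A) (fun x => f (-x)) ρ l ↔ ExceedsLeft A f ρ (-l) := by
  constructor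
  · rintro ⟨l', hl', hlt, hρ⟩
    exact ⟨-l', hl', neg_lt_neg hlt, hρ⟩
  · rintro ⟨l', hl', hlt, hρ⟩
    exact ⟨-l', by simpa using hl', lt_neg.1 hlt, by simpa using hρ⟩

theorem QuasiconcaveOn.le_of_exceedsLeft (hf : QuasiconcaveOn ℝ A f) (hl : f l < ρ)
    (hL : ExceedsLeft A f ρ l) {l₂ : ℝ} (hl₂ : l₂ ∈ A) (hle : l ≤ l₂) : f l₂ ≤ f l := by
  obtain ⟨η, hη, hηl, hρ⟩ := hL
  rcases min_le_iff.1 (hf.min_le_of_mem_Icc hη hl₂ ⟨hηl.le, hle⟩) with h | h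
  · linarith
  · exact h

theorem QuasiconcaveOn.le_of_exceedsRight (hf : QuasiconcaveOn ℝ A f) (hl : f l < ρ)
    (hR : ExceedsRight A f ρ l) {l₁ : ℝ} (hl₁ : l₁ ∈ A) (hle : l₁ ≤ l) : f l₁ ≤ f l := by
  obtain ⟨ξ, hξ, hlξ, hρ⟩ := hR
  rcases min_le_iff.1 (hf.min_le_of_mem_Icc hl₁ hξ ⟨hle, hlξ.le⟩) with h | h
  · exact h
  · linarith

end Exceeds

/-- The standing assumptions of the proof by contradiction: `ρ` lies strictly between
`sup_λ inf_x P` and `inf_x sup_λ P`, and `m λ` is the unique global minimiser of `P · λ`. -/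
structure UniqueMinimizerData {X : Type*} [TopologicalSpace X] (A : Set ℝ) (P : X → ℝ → ℝ)
    (ρ : ℝ) (m : ℝ → X) : Prop where
  isOpen : IsOpen A
  convex : Convex ℝ A
  quasiconcaveOn : ∀ x, QuasiconcaveOn ℝ A (P x)
  continuousOn : ∀ x, ContinuousOn (P x) A
  lowerSemicontinuous : ∀ l ∈ A, LowerSemicontinuous (P · l)
  isCompact : ∀ l ∈ A, IsCompact {x | P x l ≤ ρ}
  apply_lt : ∀ l ∈ A, P (m l) l < ρ
  exists_lt_apply : ∀ x, ∃ l ∈ A, ρ < P x l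
  apply_le : ∀ l ∈ A, ∀ y, P (m l) l ≤ P y l
  eq_of_forall_le : ∀ l ∈ A, ∀ u, (∀ y, P u l ≤ P y l) → u = m l

namespace UniqueMinimizerData

variable {X : Type*} [TopologicalSpace X] {A : Set ℝ} {P : X → ℝ → ℝ} {ρ : ℝ} {m : ℝ → X}

theorem neg (h : UniqueMinimizerData A P ρ m) :
    UniqueMinimizerData (-A) (fun x l => P x (-l)) ρ (fun l => m (-l)) where
  isOpen := h.isOpen.neg
  convex := h.convex.neg
  quasiconcaveOn x r := by
    have hset : {l ∈ -A | r ≤ P x (-l)} = -{l ∈ A | r ≤ P x l} := by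
      ext l
      simp [Set.mem_neg]
    exact hset ▸ (h.quasiconcaveOn x r).neg
  continuousOn x := (h.continuousOn x).comp continuous_neg.continuousOn fun _ hl => hl
  lowerSemicontinuous l hl := h.lowerSemicontinuous (-l) hl
  isCompact l hl := h.isCompact (-l) hl
  apply_lt l hl := h.apply_lt (-l) hl
  exists_lt_apply x := by
    obtain ⟨l, hl, hρ⟩ := h.exists_lt_apply x
    exact ⟨-l, by simpa using hl, by simpa using hρ⟩
  apply_le l hl := h.apply_le (-l) hl
  eq_of_forall_le l hl := h.eq_of_forall_le (-l) hl

theorem exceedsLeft_or_exceedsRight (h : UniqueMinimizerData A P ρ m) {l : ℝ} (hl : l ∈ A) :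
    ExceedsLeft A (P (m l)) ρ l ∨ ExceedsRight A (P (m l)) ρ l := by
  obtain ⟨l', hl', hρ⟩ := h.exists_lt_apply (m l)
  rcases lt_trichotomy l' l with hlt | rfl | hgt
  · exact .inl ⟨l', hl', hlt, hρ⟩
  · exact absurd (h.apply_lt l' hl) hρ.not_gt
  · exact .inr ⟨l', hl', hgt, hρ⟩

/-- Were `l₁ < l₂`, the one-sided monotonicity of `P (m l₁)` and `P (m l₂)` would make `m l₂`
minimise `P · l₁` too, so `m l₁ = m l₂` would exceed `ρ` on both sides of `l₁`. -/
theorem le_of_exceedsLeft_of_exceedsRight (h : UniqueMinimizerData A P ρ m) {l₁ l₂ : ℝ}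
    (hl₁ : l₁ ∈ A) (hl₂ : l₂ ∈ A) (hL : ExceedsLeft A (P (m l₁)) ρ l₁)
    (hR : ExceedsRight A (P (m l₂)) ρ l₂) : l₂ ≤ l₁ := by
  by_contra! hlt
  have hdec := (h.quasiconcaveOn _).le_of_exceedsLeft (h.apply_lt l₁ hl₁) hL hl₂ hlt.le
  have hinc := (h.quasiconcaveOn _).le_of_exceedsRight (h.apply_lt l₂ hl₂) hR hl₁ hlt.le
  have hmin : ∀ y, P (m l₂) l₁ ≤ P y l₁ := fun y =>
    calc P (m l₂) l₁ ≤ P (m l₂) l₂ := hinc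
      _ ≤ P (m l₁) l₂ := h.apply_le l₂ hl₂ _
      _ ≤ P (m l₁) l₁ := hdec
      _ ≤ P y l₁ := h.apply_le l₁ hl₁ y
  obtain ⟨ξ, hξ, hlξ, hρ⟩ := hR
  rw [h.eq_of_forall_le l₁ hl₁ _ hmin] at hρ
  have := (h.quasiconcaveOn _).le_of_exceedsLeft (h.apply_lt l₁ hl₁) hL hξ (hlt.trans hlξ).le
  linarith [h.apply_lt l₁ hl₁]

/-- Letting `l` decrease to the left end of `A`: the minimisers `m l` stay in a compact
sublevel set, and a cluster point of them would satisfy `P w · ≤ ρ` on all of `A`. -/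
theorem exists_not_exceedsLeft (h : UniqueMinimizerData A P ρ m) (hA : A.Nonempty) :
    ∃ l ∈ A, ¬ExceedsLeft A (P (m l)) ρ l := by
  by_contra! hall
  obtain ⟨l₀, hl₀⟩ := hA
  have : Nonempty A := ⟨⟨l₀, hl₀⟩⟩
  have hdec : ∀ i : A, ∀ j ∈ A, (i : ℝ) ≤ j → P (m i) j ≤ ρ := fun i j hj hij =>
    ((h.quasiconcaveOn _).le_of_exceedsLeft (h.apply_lt i i.2) (hall i i.2) hj hij).trans
      (h.apply_lt i i.2).le
  obtain ⟨w, -, hw⟩ := (h.isCompact l₀ hl₀).exists_forall_le_of_tendsto (F := atBot)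
    (φ := fun i : A => m i) (eventually_le_atBot ⟨l₀, hl₀⟩ |>.mono fun i hi => hdec i l₀ hl₀ hi)
    h.lowerSemicontinuous tendsto_const_nhds
    (fun j hj => eventually_le_atBot ⟨j, hj⟩ |>.mono fun i hi => hdec i j hj hi)
  obtain ⟨l, hl, hρ⟩ := h.exists_lt_apply w
  exact (hw l hl).not_gt hρ

theorem exists_not_exceedsRight (h : UniqueMinimizerData A P ρ m) (hA : A.Nonempty) :
    ∃ l ∈ A, ¬ExceedsRight A (P (m l)) ρ l := by
  obtain ⟨l, hl, hL⟩ := h.neg.exists_not_exceedsLeft (by simpa using hA.neg)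
  exact ⟨-l, hl, fun hR => hL (exceedsLeft_neg_iff.2 hR)⟩

/-- Letting `l` decrease to `θ`: a cluster point `w` of the minimisers `m l` satisfies
`P w l ≤ P (m θ) θ` for `l > θ`, hence by continuity minimises `P · θ`; so `w = m θ`,
which contradicts `m θ` exceeding `ρ` to the right of `θ`. -/
theorem exists_gt_not_exceedsLeft (h : UniqueMinimizerData A P ρ m) {θ : ℝ} (hθ : θ ∈ A)
    (hR : ExceedsRight A (P (m θ)) ρ θ) : ∃ l ∈ A, θ < l ∧ ¬ExceedsLeft A (P (m l)) ρ l := by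
  by_contra! hall
  obtain ⟨ξ, hξ, hθξ, hρ⟩ := hR
  have hA : ∀ᶠ l in 𝓝[>] θ, l ∈ A ∧ θ < l :=
    Eventually.and (mem_nhdsWithin_of_mem_nhds (h.isOpen.mem_nhds hθ)) self_mem_nhdsWithin
  have hlt : ∀ j, θ < j → ∀ᶠ l in 𝓝[>] θ, l < j := fun j hj =>
    eventually_nhdsWithin_of_eventually_nhds (gt_mem_nhds hj)
  have hdec : ∀ l ∈ A, θ < l → ∀ j ∈ A, l ≤ j → P (m l) j ≤ P (m l) l := fun l hl hθl j hj =>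
    (h.quasiconcaveOn _).le_of_exceedsLeft (h.apply_lt l hl) (hall l hl hθl) hj
  have hcont : ∀ x, Tendsto (P x) (𝓝[>] θ) (𝓝 (P x θ)) := fun x =>
    ((h.continuousOn x).continuousAt (h.isOpen.mem_nhds hθ)).tendsto.mono_left
      nhdsWithin_le_nhds
  obtain ⟨w, -, hw⟩ := (h.isCompact ξ hξ).exists_forall_le_of_tendsto (φ := m)
    (s := A ∩ Ioi θ) (f := fun j x => P x j)
    ((hA.and (hlt ξ hθξ)).mono fun l ⟨⟨hl, hθl⟩, hlξ⟩ =>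
      (hdec l hl hθl ξ hξ hlξ.le).trans (h.apply_lt l hl).le)
    (fun j hj => h.lowerSemicontinuous j hj.1) (hcont (m θ))
    (fun j ⟨hj, hθj⟩ => (hA.and (hlt j hθj)).mono fun l ⟨⟨hl, hθl⟩, hlj⟩ =>
      (hdec l hl hθl j hj hlj.le).trans (h.apply_le l hl (m θ)))
  have hwθ : P w θ ≤ P (m θ) θ :=
    le_of_tendsto (hcont w) (hA.mono fun l hl => hw l hl)
  have hwm : w = m θ := h.eq_of_forall_le θ hθ w fun y => hwθ.trans (h.apply_le θ hθ y)
  have := hw ξ ⟨hξ, hθξ⟩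
  rw [hwm] at this
  linarith [h.apply_lt θ hθ]

theorem exists_lt_not_exceedsRight (h : UniqueMinimizerData A P ρ m) {θ : ℝ} (hθ : θ ∈ A)
    (hL : ExceedsLeft A (P (m θ)) ρ θ) : ∃ l ∈ A, l < θ ∧ ¬ExceedsRight A (P (m l)) ρ l := by
  obtain ⟨l, hl, hθl, hL'⟩ := h.neg.exists_gt_not_exceedsLeft (θ := -θ) (by simpa using hθ)
    (exceedsRight_neg_iff.2 (by simpa using hL))
  exact ⟨-l, hl, neg_lt.1 hθl, fun hR => hL' (exceedsLeft_neg_iff.2 hR)⟩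

/-- The points whose minimiser exceeds `ρ` on the right form an initial segment of `A`;
its supremum `θ` lies in `A`, and neither orientation at `θ` is possible. -/
theorem false (h : UniqueMinimizerData A P ρ m) (hA : A.Nonempty) : False := by
  obtain ⟨v₀, hv₀, hv₀R⟩ : ∃ l ∈ A, ExceedsRight A (P (m l)) ρ l := by
    obtain ⟨l, hl, hL⟩ := h.exists_not_exceedsLeft hA
    exact ⟨l, hl, (h.exceedsLeft_or_exceedsRight hl).resolve_left hL⟩
  obtain ⟨u₀, hu₀, hu₀L⟩ : ∃ l ∈ A, ExceedsLeft A (P (m l)) ρ l := by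
    obtain ⟨l, hl, hR⟩ := h.exists_not_exceedsRight hA
    exact ⟨l, hl, (h.exceedsLeft_or_exceedsRight hl).resolve_right hR⟩
  set V := {l ∈ A | ExceedsRight A (P (m l)) ρ l}
  have hVu₀ : ∀ v ∈ V, v ≤ u₀ := fun v hv =>
    h.le_of_exceedsLeft_of_exceedsRight hu₀ hv.1 hu₀L hv.2
  have hV : V.Nonempty := ⟨v₀, hv₀, hv₀R⟩
  have hθ : sSup V ∈ A := h.convex.ordConnected.out hv₀ hu₀
    ⟨le_csSup ⟨u₀, hVu₀⟩ ⟨hv₀, hv₀R⟩, csSup_le hV hVu₀⟩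
  rcases h.exceedsLeft_or_exceedsRight hθ with hL | hR
  · obtain ⟨l, hl, hlθ, hlR⟩ := h.exists_lt_not_exceedsRight hθ hL
    obtain ⟨v, hv, hlv⟩ := exists_lt_of_lt_csSup hV hlθ
    have hlL := (h.exceedsLeft_or_exceedsRight hl).resolve_right hlR
    exact hlv.not_ge (h.le_of_exceedsLeft_of_exceedsRight hl hv.1 hlL hv.2)
  · obtain ⟨l, hl, hθl, hlL⟩ := h.exists_gt_not_exceedsLeft hθ hR
    have hlR := (h.exceedsLeft_or_exceedsRight hl).resolve_left hlL
    exact hθl.not_ge (le_csSup ⟨u₀, hVu₀⟩ ⟨hl, hlR⟩)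

end UniqueMinimizerData

/-- Theorem B = [3], Theorem 1: if `P : X × A → ℝ` is quasi-concave
and continuous in `λ ∈ A` (an open interval), lower semicontinuous and inf-compact
in `x`, and satisfies the strict minimax inequality
`sup_{λ∈A} inf_{x∈X} P < inf_{x∈X} sup_{λ∈A} P`, then for some `λ* ∈ A` the
function `P(·, λ*)` has at least two global minima. -/
theorem stmt2 {X : Type*} [TopologicalSpace X]
    (A : Set ℝ) (hAopen : IsOpen A) (hAinterval : Convex ℝ A) (hAne : A.Nonempty)
    (P : X → ℝ → ℝ)
    (hquasiconcave : ∀ x : X, ∀ ρ : ℝ, Convex ℝ {l ∈ A | ρ ≤ P x l})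
    (hcont : ∀ x : X, ContinuousOn (fun l => P x l) A)
    (hlsc : ∀ l ∈ A, LowerSemicontinuous fun x => P x l)
    (hinfcpt : ∀ l ∈ A, ∀ ρ : ℝ, IsCompact {x : X | P x l ≤ ρ})
    (hminimax : (⨆ l : A, ⨅ x : X, (P x l : EReal)) <
      ⨅ x : X, ⨆ l : A, (P x l : EReal)) :
    ∃ lstar ∈ A, ∃ u v : X, u ≠ v ∧
      (∀ y : X, P u lstar ≤ P y lstar) ∧ (∀ y : X, P v lstar ≤ P y lstar) := by
  obtain ⟨ρ, hbelow, habove⟩ := exists_real_between_of_iSup_iInf_lt hminimax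
  by_contra! hunique
  have hmin : ∀ l ∈ A, ∃ x, P x l < ρ ∧ ∀ y, P x l ≤ P y l := fun l hl => by
    obtain ⟨x₀, hx₀⟩ := hbelow ⟨l, hl⟩
    obtain ⟨x, hx⟩ := (hlsc l hl).exists_forall_le_of_isCompact (hinfcpt l hl ρ) hx₀.le
    exact ⟨x, (hx x₀).trans_lt hx₀, hx⟩
  obtain ⟨l₀, hl₀⟩ := hAne
  have : Nonempty X := ⟨(hbelow ⟨l₀, hl₀⟩).choose⟩
  choose! m hmρ hm using hmin
  refine UniqueMinimizerData.false (m := m) ⟨hAopen, hAinterval, hquasiconcave, hcont, hlsc,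
    fun l hl => hinfcpt l hl ρ, hmρ, fun x => ?_, hm, fun l hl u hu => ?_⟩ ⟨l₀, hl₀⟩
  · obtain ⟨⟨l, hl⟩, hρ⟩ := habove x
    exact ⟨l, hl, hρ⟩
  · by_contra hne
    obtain ⟨y, hy⟩ := hunique l hl u (m l) hne hu
    exact (hm l hl y).not_gt hy
end

section
/- Let X be a real normed space and I, J, Ψ, Φ : X → ℝ functions. Let x₀ ∈ X be a strict local minimum of I with I(x₀) = J(x₀) = Ψ(x₀) = Φ(x₀) = 0. Assume liminf_{x→x₀} J(x)/I(x) ≥ 0, liminf_{x→x₀} Φ(x)/I(x) ≥ 0, and L := liminf_{x→x₀} Ψ(x)/I(x) > −∞. Then for every ν > 0, every λ > 0, and every μ > max{0, −L}, the point x₀ is a strict local minimum of the functional E = μ(I + νJ) + Ψ + λΦ. If moreover there exists x₁ ∈ X with max{J(x₁), Ψ(x₁), Φ(x₁)} < 0 and ν > −I(x₁)/J(x₁), then E(x₁) < 0 = E(x₀), so x₀ is not a global minimum of E. -/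
open Filter Topology

/-!
Near `x₀` one factors `E = I · (μ + μν J/I + Ψ/I + λ Φ/I)`. The liminf hypotheses make the
three quotient terms eventually exceed `-δ`, `L - δ` and `-δ` for any `δ > 0`; taking
`δ = (μ + L)/3` the bracket is eventually positive, and so is `I` on a punctured neighbourhood.
At `x₁` every summand of `E` is negative, `I + νJ` because `ν > -I/J` and `J < 0`.
-/

section EventuallyNegLt

variable {α : Type*} {l : Filter α}

theorem eventually_neg_lt_const_mul {f : α → ℝ} (hf : ∀ ε : ℝ, 0 < ε → ∀ᶠ x in l, -ε < f x)
    {c : ℝ} (hc : 0 < c) : ∀ ε : ℝ, 0 < ε → ∀ᶠ x in l, -ε < c * f x := by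
  intro ε hε
  filter_upwards [hf (ε / c) (div_pos hε hc)] with x hx
  have := mul_lt_mul_of_pos_left hx hc
  rwa [mul_neg, mul_div_cancel₀ ε hc.ne'] at this

theorem eventually_pos_add_add_add {f g h : α → ℝ}
    (hf : ∀ ε : ℝ, 0 < ε → ∀ᶠ x in l, -ε < f x)
    (hh : ∀ ε : ℝ, 0 < ε → ∀ᶠ x in l, -ε < h x)
    (hg : IsBoundedUnder (· ≥ ·) l g) {μ : ℝ} (hμ : -liminf g l < μ) :
    ∀ᶠ x in l, 0 < μ + f x + g x + h x := by
  set δ := (μ + liminf g l) / 3 with hδ_def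
  have hδ : 0 < δ := by linarith
  have hg' : ∀ᶠ x in l, liminf g l - δ < g x :=
    eventually_lt_of_lt_liminf (by linarith) hg
  filter_upwards [hf δ hδ, hh δ hδ, hg'] with x hfx hhx hgx
  linarith [hδ_def]

end EventuallyNegLt

theorem energy_eq_mul_quotients {i j p q : ℝ} (hi : i ≠ 0) (μ ν l : ℝ) :
    μ * (i + ν * j) + p + l * q = i * (μ + μ * ν * (j / i) + p / i + l * (q / i)) := by
  field_simp

theorem energy_neg {i j p q : ℝ} (hj : j < 0) (hp : p < 0) (hq : q < 0) {μ ν l : ℝ}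
    (hμ : 0 < μ) (hl : 0 < l) (hν : -(i / j) < ν) : μ * (i + ν * j) + p + l * q < 0 := by
  rw [← neg_div, div_lt_iff_of_neg hj] at hν
  nlinarith

theorem stmt9_general {X : Type*} [NormedAddCommGroup X]
    (I J Ψ Φ : X → ℝ) (x₀ : X)
    (hslm : ∀ᶠ x in 𝓝[≠] x₀, I x₀ < I x)
    (hI0 : I x₀ = 0) (hJ0 : J x₀ = 0) (hΨ0 : Ψ x₀ = 0) (hΦ0 : Φ x₀ = 0)
    (hJliminf : ∀ ε : ℝ, 0 < ε → ∀ᶠ x in 𝓝[≠] x₀, -ε < J x / I x)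
    (hΦliminf : ∀ ε : ℝ, 0 < ε → ∀ᶠ x in 𝓝[≠] x₀, -ε < Φ x / I x)
    (hΨbdd : IsBoundedUnder (· ≥ ·) (𝓝[≠] x₀) (fun x => Ψ x / I x)) :
    ∀ ν : ℝ, 0 < ν → ∀ l : ℝ, 0 < l → ∀ μ : ℝ, 0 < μ →
      -(liminf (fun x => Ψ x / I x) (𝓝[≠] x₀)) < μ →
      (∀ᶠ x in 𝓝[≠] x₀,
          μ * (I x₀ + ν * J x₀) + Ψ x₀ + l * Φ x₀ < μ * (I x + ν * J x) + Ψ x + l * Φ x) ∧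
      (∀ x₁ : X, max (J x₁) (max (Ψ x₁) (Φ x₁)) < 0 → -(I x₁ / J x₁) < ν →
        μ * (I x₁ + ν * J x₁) + Ψ x₁ + l * Φ x₁ <
          μ * (I x₀ + ν * J x₀) + Ψ x₀ + l * Φ x₀ ∧
        ¬ (∀ y : X, μ * (I x₀ + ν * J x₀) + Ψ x₀ + l * Φ x₀ ≤
            μ * (I y + ν * J y) + Ψ y + l * Φ y)) := by
  intro ν hν l hl μ hμ hμL
  have hE₀ : μ * (I x₀ + ν * J x₀) + Ψ x₀ + l * Φ x₀ = 0 := by simp [hI0, hJ0, hΨ0, hΦ0]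
  rw [hE₀]
  refine ⟨?_, fun x₁ hmax hν₁ => ?_⟩
  · have hbracket := eventually_pos_add_add_add
      (eventually_neg_lt_const_mul hJliminf (mul_pos hμ hν))
      (eventually_neg_lt_const_mul hΦliminf hl) hΨbdd hμL
    filter_upwards [hslm, hbracket] with x hIx hx
    rw [hI0] at hIx
    rw [energy_eq_mul_quotients hIx.ne']
    exact mul_pos hIx hx
  · obtain ⟨hJ, hΨ, hΦ⟩ : J x₁ < 0 ∧ Ψ x₁ < 0 ∧ Φ x₁ < 0 := by simpa only [max_lt_iff] using hmax
    have hE₁ := energy_neg hJ hΨ hΦ hμ hl hν₁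
    exact ⟨hE₁, fun hmin => (hmin x₁).not_gt hE₁⟩

/-- if `x₀` is a strict local minimum of `I` with
`I(x₀) = J(x₀) = Ψ(x₀) = Φ(x₀) = 0`, `liminf_{x→x₀} J/I ≥ 0`,
`liminf_{x→x₀} Φ/I ≥ 0` and `L := liminf_{x→x₀} Ψ/I > -∞`, then for all `ν > 0`,
`λ > 0` and `μ > max{0, -L}`, `x₀` is a strict local minimum of
`E = μ(I + νJ) + Ψ + λΦ`; and if `x₁` satisfies `max{J(x₁),Ψ(x₁),Φ(x₁)} < 0` and
`ν > -I(x₁)/J(x₁)`, then `E(x₁) < 0 = E(x₀)`, so `x₀` is not a global minimum. -/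
theorem stmt9 {X : Type*} [NormedAddCommGroup X] [NormedSpace ℝ X]
    (I J Ψ Φ : X → ℝ) (x₀ : X)
    (hslm : ∀ᶠ x in 𝓝[≠] x₀, I x₀ < I x)
    (hI0 : I x₀ = 0) (hJ0 : J x₀ = 0) (hΨ0 : Ψ x₀ = 0) (hΦ0 : Φ x₀ = 0)
    (hJliminf : ∀ ε : ℝ, 0 < ε → ∀ᶠ x in 𝓝[≠] x₀, -ε < J x / I x)
    (hΦliminf : ∀ ε : ℝ, 0 < ε → ∀ᶠ x in 𝓝[≠] x₀, -ε < Φ x / I x)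
    (hΨbdd : IsBoundedUnder (· ≥ ·) (𝓝[≠] x₀) (fun x => Ψ x / I x)) :
    ∀ ν : ℝ, 0 < ν → ∀ l : ℝ, 0 < l → ∀ μ : ℝ, 0 < μ →
      -(liminf (fun x => Ψ x / I x) (𝓝[≠] x₀)) < μ →
      (∀ᶠ x in 𝓝[≠] x₀,
          μ * (I x₀ + ν * J x₀) + Ψ x₀ + l * Φ x₀ < μ * (I x + ν * J x) + Ψ x + l * Φ x) ∧
      (∀ x₁ : X, max (J x₁) (max (Ψ x₁) (Φ x₁)) < 0 → -(I x₁ / J x₁) < ν →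
        μ * (I x₁ + ν * J x₁) + Ψ x₁ + l * Φ x₁ <
          μ * (I x₀ + ν * J x₀) + Ψ x₀ + l * Φ x₀ ∧
        ¬ (∀ y : X, μ * (I x₀ + ν * J x₀) + Ψ x₀ + l * Φ x₀ ≤
            μ * (I y + ν * J y) + Ψ y + l * Φ y)) :=
  stmt9_general I J Ψ Φ x₀ hslm hI0 hJ0 hΨ0 hΦ0 hJliminf hΦliminf hΨbdd
end
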